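/- arXiv:2212.05671 — 3 statements merged into one kernel-verified Lean document; each statement's English description precedes it below -/
import Mathlib

section
/- Let A, B < 0, D > 0, ξ > 0, λ > 0, m, a be real constants related by A² = η²(1−ρ²), B = ρη(λ−ρη/2), C² = (λ−ρη/2)² + η²/4, D² = 1/A² + C²/B², ξ = η²/(λv̄), m = −ρη/ξ, a = ρη/λ for Heston parameters v̄, λ, η > 0 and ρ ∈ (−1, 0), and set K = √(1 + (aA²/4B)/(1 − a/2)). Define ω(x) = −(λ/ξ)(1−a/2) − (B/A²)(x−m) − (BD/ξ)√(1 + (ξ/A)²(x−m)²) and ω̄(x) = −K(λ/ξ)(1−a/2) − K(B/A²)(x−m) − (1/K)(BD/ξ)√(1 + (ξ/A)²(x−m)²). Then ω̄(x)² = ω(x)² − x²/4 for all x ∈ ℝ. -/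
set_option maxHeartbeats 2000000 in
theorem stmt9 (vb lam eta rho A B C D xi m a K : ℝ)
    (hvb : 0 < vb) (hlam : 0 < lam) (heta : 0 < eta)
    (hrho1 : -1 < rho) (hrho2 : rho < 0)
    (hF : 0 < lam - rho * eta / 2)
    (hA : 0 < A) (hA2 : A ^ 2 = eta ^ 2 * (1 - rho ^ 2))
    (hB : B = rho * eta * (lam - rho * eta / 2))
    (hC : 0 < C) (hC2 : C ^ 2 = (lam - rho * eta / 2) ^ 2 + eta ^ 2 / 4)
    (hD : 0 < D) (hD2 : D ^ 2 = 1 / A ^ 2 + C ^ 2 / B ^ 2)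
    (hxi : xi = eta ^ 2 / (lam * vb)) (hm : m = -(rho * eta) / xi)
    (ha : a = rho * eta / lam)
    (ha2 : 0 < 1 - a / 2)
    (hK : K = Real.sqrt (1 + (a * A ^ 2 / (4 * B)) / (1 - a / 2))) :
    ∀ x : ℝ,
      (-(K * (lam / xi) * (1 - a / 2)) - K * (B / A ^ 2) * (x - m)
          - (1 / K) * (B * D / xi) * Real.sqrt (1 + (xi / A) ^ 2 * (x - m) ^ 2)) ^ 2
        = (-((lam / xi) * (1 - a / 2)) - (B / A ^ 2) * (x - m)
          - (B * D / xi) * Real.sqrt (1 + (xi / A) ^ 2 * (x - m) ^ 2)) ^ 2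
          - x ^ 2 / 4 := by
  intro x
  have hre : rho * eta < 0 := mul_neg_of_neg_of_pos hrho2 heta
  have hBneg : B < 0 := by rw [hB]; exact mul_neg_of_neg_of_pos hre hF
  have haneg : a < 0 := by rw [ha]; exact div_neg_of_neg_of_pos hre hlam
  have hA2pos : 0 < A ^ 2 := by positivity
  have hcpos : 0 < a * A ^ 2 / (4 * B) / (1 - a / 2) := by
    apply div_pos _ ha2
    apply div_pos_of_neg_of_neg
    · exact mul_neg_of_neg_of_pos haneg hA2pos
    · linarith
  have hK0 : 0 < K := by
    rw [hK]; exact Real.sqrt_pos.mpr (by linarith)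
  have hKne : K ≠ 0 := ne_of_gt hK0
  have hK2 : K ^ 2 = 1 + a * A ^ 2 / (4 * B) / (1 - a / 2) := by
    rw [hK]; exact Real.sq_sqrt (by linarith)
  set s := Real.sqrt (1 + (xi / A) ^ 2 * (x - m) ^ 2) with hsdef
  have hsq : s ^ 2 = 1 + (xi / A) ^ 2 * (x - m) ^ 2 :=
    Real.sq_sqrt (by positivity)
  have hk : K * (1 / K) = 1 := by field_simp
  have heta' : eta ≠ 0 := ne_of_gt heta
  have hlam' : lam ≠ 0 := ne_of_gt hlam
  have hvb' : vb ≠ 0 := ne_of_gt hvb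
  have hrho' : rho ≠ 0 := ne_of_lt hrho2
  have h1r : (1 : ℝ) - rho ^ 2 ≠ 0 := by nlinarith
  have hFne : lam - rho * eta / 2 ≠ 0 := ne_of_gt hF
  have h2l : 2 * lam - rho * eta ≠ 0 := by nlinarith
  have hAne : A ≠ 0 := ne_of_gt hA
  have hBne : B ≠ 0 := ne_of_lt hBneg
  have hq1 : rho * eta * lam ^ 3 * 16 - rho ^ 2 * eta ^ 2 * lam ^ 2 * 16 + rho ^ 3 * eta ^ 3 * lam * 4 ≠ 0 := by
    have h : rho * eta * lam ^ 3 * 16 - rho ^ 2 * eta ^ 2 * lam ^ 2 * 16 + rho ^ 3 * eta ^ 3 * lam * 4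
        = 4 * (rho * eta) * lam * (2 * lam - rho * eta) ^ 2 := by ring
    rw [h]
    exact mul_ne_zero (mul_ne_zero (by simp [ne_of_lt hre]) hlam') (pow_ne_zero _ h2l)
  have hq2 : rho ^ 2 * eta ^ 2 * lam ^ 2 * 64 - rho ^ 3 * eta ^ 3 * lam * 64 + rho ^ 4 * eta ^ 4 * 16 ≠ 0 := by
    have h : rho ^ 2 * eta ^ 2 * lam ^ 2 * 64 - rho ^ 3 * eta ^ 3 * lam * 64 + rho ^ 4 * eta ^ 4 * 16
        = 16 * (rho * eta) ^ 2 * (2 * lam - rho * eta) ^ 2 := by ring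
    rw [h]
    exact mul_ne_zero (mul_ne_zero (by norm_num) (pow_ne_zero _ (ne_of_lt hre))) (pow_ne_zero _ h2l)
  have ha2ne' : (1 : ℝ) - rho * eta / lam / 2 ≠ 0 := by
    have h := ha2; rw [ha] at h; exact ne_of_gt h
  have hBr : rho * eta * (lam - rho * eta / 2) ≠ 0 := by
    have := hBneg; rw [hB] at this; exact ne_of_lt this
  have hq3 : rho ^ 2 * eta ^ 2 * lam ^ 2 * 4 - rho ^ 3 * eta ^ 3 * lam * 4 + rho ^ 4 * eta ^ 4 ≠ 0 := by
    have h : rho ^ 2 * eta ^ 2 * lam ^ 2 * 4 - rho ^ 3 * eta ^ 3 * lam * 4 + rho ^ 4 * eta ^ 4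
        = (rho * eta) ^ 2 * (2 * lam - rho * eta) ^ 2 := by ring
    rw [h]
    exact mul_ne_zero (pow_ne_zero _ (ne_of_lt hre)) (pow_ne_zero _ h2l)
  have hK2' : K ^ 2 = 1 + A ^ 2 / (2 * lam - rho * eta) ^ 2 := by
    rw [hK2, hB, ha]
    have hd : 4 * (rho * eta * (lam - rho * eta / 2)) * (1 - rho * eta / lam / 2) ≠ 0 :=
      mul_ne_zero (mul_ne_zero (by norm_num) hBr) ha2ne'
    have hc' : rho * eta / lam * A ^ 2 / (4 * (rho * eta * (lam - rho * eta / 2))) / (1 - rho * eta / lam / 2)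
        = A ^ 2 / (2 * lam - rho * eta) ^ 2 := by
      rw [div_div, div_eq_div_iff hd (pow_ne_zero _ h2l)]
      field_simp
      ring
    rw [hc']
  have hD2' : D ^ 2 = 1 / A ^ 2 + 4 * C ^ 2 / (rho ^ 2 * eta ^ 2 * (2 * lam - rho * eta) ^ 2) := by
    rw [hD2, hB]
    have hden2 : rho ^ 2 * eta ^ 2 * (2 * lam - rho * eta) ^ 2 ≠ 0 :=
      mul_ne_zero (mul_ne_zero (pow_ne_zero _ hrho') (pow_ne_zero _ heta')) (pow_ne_zero _ h2l)
    have hc2 : C ^ 2 / (rho * eta * (lam - rho * eta / 2)) ^ 2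
        = 4 * C ^ 2 / (rho ^ 2 * eta ^ 2 * (2 * lam - rho * eta) ^ 2) := by
      rw [div_eq_div_iff (pow_ne_zero _ hBr) hden2]
      ring
    rw [hc2]
  have h2 : K ^ 2 * K ^ 2 * ((lam / xi) * (1 - a / 2) + B / A ^ 2 * (x - m)) ^ 2
        + B ^ 2 * D ^ 2 / xi ^ 2 * (1 + xi ^ 2 / A ^ 2 * (x - m) ^ 2)
      = K ^ 2 * (((lam / xi) * (1 - a / 2) + B / A ^ 2 * (x - m)) ^ 2
        + B ^ 2 * D ^ 2 / xi ^ 2 * (1 + xi ^ 2 / A ^ 2 * (x - m) ^ 2) - x ^ 2 / 4) := by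
    rw [hK2', hD2']
    subst hm hxi ha hB
    rw [hC2, hA2]
    have h2l' : 2 * lam - eta * rho ≠ 0 := by rwa [mul_comm eta]
    field_simp [hq1, hq2, hq3, h2l']
    ring
  linear_combination (1 / K) ^ 2 * h2
    + (-(((lam / xi) * (1 - a / 2) + B / A ^ 2 * (x - m)) ^ 2 * K ^ 2 * (1 + K * (1 / K)))
        + 2 * ((lam / xi) * (1 - a / 2) + B / A ^ 2 * (x - m)) * (B * D / xi) * s
        + ((lam / xi) * (1 - a / 2) + B / A ^ 2 * (x - m)) ^ 2 * (K * (1 / K) + 1)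
        + (B * D / xi) ^ 2 * (1 + (xi / A) ^ 2 * (x - m) ^ 2) * (K * (1 / K) + 1)
        - x ^ 2 / 4 * (K * (1 / K) + 1)) * hk
    + ((1 / K) ^ 2 * (B * D / xi) ^ 2 - (B * D / xi) ^ 2) * hsq
end

section
/- Under the Heston constants of the previous setting (ρ < 0), the function ω̄(x) = −K(λ/ξ)(1−a/2) − K(B/A²)(x−m) − (1/K)(BD/ξ)√(1 + (ξ/A)²(x−m)²) vanishes exactly at the two points x₋ = −v̄/2 and x₊ = v̄/(2(1−a)). -/
set_option maxHeartbeats 1000000 in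
private lemma auxBD (F A C D K eta rho : ℝ) (hA : 0 < A) (hrho2 : rho < 0)
    (heta : 0 < eta) (hF : 0 < F) (hD : 0 < D) (hKpos : 0 < K)
    (hC2 : C ^ 2 = F ^ 2 + eta ^ 2 / 4)
    (hD2 : D ^ 2 = 1 / A ^ 2 + C ^ 2 / (rho * eta * F) ^ 2)
    (hK2 : K ^ 2 = 1 + A ^ 2 / (4 * F ^ 2))
    (hA2 : A ^ 2 = eta ^ 2 * (1 - rho ^ 2)) :
    rho * eta * F * D = -(eta * F * K) / A := by
  have hAne : A ≠ 0 := ne_of_gt hA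
  have hrhone : rho ≠ 0 := ne_of_lt hrho2
  have hetane : eta ≠ 0 := ne_of_gt heta
  have hFne : F ≠ 0 := ne_of_gt hF
  have hK2c : K ^ 2 * (4 * F ^ 2) = 4 * F ^ 2 + A ^ 2 := by
    rw [hK2, add_mul, div_mul_cancel₀ _ (by positivity : (4 * F ^ 2 : ℝ) ≠ 0)]
    ring
  have l4 : (rho * eta * F) ^ 2 + (F ^ 2 + eta ^ 2 / 4) * A ^ 2 = eta ^ 2 * F ^ 2 * K ^ 2 := by
    linear_combination (-(eta ^ 2 / 4)) * hK2c + F ^ 2 * hA2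
  have key : (rho * eta * F * D) ^ 2 = (eta * F * K / A) ^ 2 := by
    have e : (rho * eta * F * D) ^ 2 = (rho * eta * F) ^ 2 * D ^ 2 := by ring
    rw [e, hD2, hC2]
    field_simp
    linear_combination 4 * l4
  have hfac : (rho * eta * F * D - -(eta * F * K) / A) * (rho * eta * F * D + -(eta * F * K) / A) = 0 := by
    linear_combination key
  rcases mul_eq_zero.1 hfac with h | h
  · linarith [sub_eq_zero.1 h]
  · exfalso
    have h3 : -(eta * F * K) / A = -(eta * F * K / A) := by ring
    rw [h3] at h
    have h1 : rho * eta * F * D < 0 := by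
      have hp : 0 < eta * F * D := by positivity
      nlinarith
    have h2 : 0 < eta * F * K / A := by positivity
    linarith

set_option maxHeartbeats 2000000 in
private lemma stmt10_aux (vb lam eta rho A B C D xi m a K : ℝ)
    (hvb : 0 < vb) (hlam : 0 < lam) (heta : 0 < eta)
    (hrho1 : -1 < rho) (hrho2 : rho < 0)
    (hF : 0 < lam - rho * eta / 2)
    (hA : 0 < A) (hA2 : A ^ 2 = eta ^ 2 * (1 - rho ^ 2))
    (hB : B = rho * eta * (lam - rho * eta / 2))
    (hC : 0 < C) (hC2 : C ^ 2 = (lam - rho * eta / 2) ^ 2 + eta ^ 2 / 4)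
    (hD : 0 < D) (hD2 : D ^ 2 = 1 / A ^ 2 + C ^ 2 / B ^ 2)
    (hxi : xi = eta ^ 2 / (lam * vb)) (hm : m = -(rho * eta) / xi)
    (ha : a = rho * eta / lam)
    (ha2 : 0 < 1 - a / 2) (ha1 : 0 < 1 - a)
    (hK : K = Real.sqrt (1 + (a * A ^ 2 / (4 * B)) / (1 - a / 2))) :
    ∀ x : ℝ,
      (-(K * (lam / xi) * (1 - a / 2)) - K * (B / A ^ 2) * (x - m)
          - (1 / K) * (B * D / xi) * Real.sqrt (1 + (xi / A) ^ 2 * (x - m) ^ 2)) = 0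
        ↔ x = -vb / 2 ∨ x = vb / (2 * (1 - a)) := by
  subst hB hxi hm ha
  have hFne : lam - rho * eta / 2 ≠ 0 := ne_of_gt hF
  have hetane : eta ≠ 0 := ne_of_gt heta
  have hlamne : lam ≠ 0 := ne_of_gt hlam
  have hvbne : vb ≠ 0 := ne_of_gt hvb
  have hrhone : rho ≠ 0 := ne_of_lt hrho2
  have hAne : A ≠ 0 := ne_of_gt hA
  have hGpos : 0 < lam - rho * eta := by nlinarith
  have hGne : lam - rho * eta ≠ 0 := ne_of_gt hGpos
  have hrr : (0:ℝ) < 1 - rho ^ 2 := by nlinarith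
  -- simplify K
  have hKin : 1 + (rho * eta / lam * A ^ 2 / (4 * (rho * eta * (lam - rho * eta / 2)))) / (1 - rho * eta / lam / 2)
      = 1 + A ^ 2 / (4 * (lam - rho * eta / 2) ^ 2) := by
    have h1 : rho * eta / lam * A ^ 2 / (4 * (rho * eta * (lam - rho * eta / 2))) / (1 - rho * eta / lam / 2)
        = A ^ 2 / (4 * (lam - rho * eta / 2) ^ 2) := by
      rw [div_div, div_eq_div_iff
        (mul_ne_zero (mul_ne_zero (by norm_num : (4:ℝ) ≠ 0)
          (mul_ne_zero (mul_ne_zero hrhone hetane) hFne)) (ne_of_gt ha2))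
        (by positivity)]
      field_simp
    rw [h1]
  rw [hKin] at hK
  have hKpos : 0 < K := by
    rw [hK]
    apply Real.sqrt_pos.2
    positivity
  have hKne : K ≠ 0 := ne_of_gt hKpos
  have hK2 : K ^ 2 = 1 + A ^ 2 / (4 * (lam - rho * eta / 2) ^ 2) := by
    rw [hK, Real.sq_sqrt]
    positivity
  have hK2c : K ^ 2 * (4 * (lam - rho * eta / 2) ^ 2) = 4 * (lam - rho * eta / 2) ^ 2 + A ^ 2 := by
    rw [hK2, add_mul, div_mul_cancel₀ _ (by positivity : (4 * (lam - rho * eta / 2) ^ 2 : ℝ) ≠ 0)]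
    ring
  have hBD : rho * eta * (lam - rho * eta / 2) * D = -(eta * (lam - rho * eta / 2) * K) / A :=
    auxBD (lam - rho * eta / 2) A C D K eta rho hA hrho2 heta hF hD hKpos hC2 hD2 hK2 hA2
  intro x
  have hR0 : (0:ℝ) < 1 + (eta ^ 2 / (lam * vb) / A) ^ 2 * (x - -(rho * eta) / (eta ^ 2 / (lam * vb))) ^ 2 := by
    positivity
  set s := Real.sqrt (1 + (eta ^ 2 / (lam * vb) / A) ^ 2 * (x - -(rho * eta) / (eta ^ 2 / (lam * vb))) ^ 2) with hsdef
  have hs0 : 0 ≤ s := Real.sqrt_nonneg _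
  have hs2 : s ^ 2 = 1 + (eta ^ 2 / (lam * vb) / A) ^ 2 * (x - -(rho * eta) / (eta ^ 2 / (lam * vb))) ^ 2 :=
    Real.sq_sqrt hR0.le
  have hfact : (-(K * (lam / (eta ^ 2 / (lam * vb))) * (1 - rho * eta / lam / 2))
        - K * (rho * eta * (lam - rho * eta / 2) / A ^ 2) * (x - -(rho * eta) / (eta ^ 2 / (lam * vb)))
        - 1 / K * (rho * eta * (lam - rho * eta / 2) * D / (eta ^ 2 / (lam * vb))) * s)
      = ((lam - rho * eta / 2) * lam * vb / (A * eta))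
        * (s - (K * eta / A) * (1 + rho * eta * x / (lam * vb))) := by
    have e0 : A / eta + rho ^ 2 * eta / A = eta / A := by
      rw [div_add_div _ _ hetane hAne, div_eq_div_iff (mul_ne_zero hetane hAne) hAne]
      linear_combination A * hA2
    have hraw : (-(K * (lam / (eta ^ 2 / (lam * vb))) * (1 - rho * eta / lam / 2))
        - K * (rho * eta * (lam - rho * eta / 2) / A ^ 2) * (x - -(rho * eta) / (eta ^ 2 / (lam * vb)))
        - 1 / K * (rho * eta * (lam - rho * eta / 2) * D / (eta ^ 2 / (lam * vb))) * s)
      = ((lam - rho * eta / 2) * lam * vb / (A * eta))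
        * (s - K * ((A / eta + rho ^ 2 * eta / A) + rho * eta ^ 2 * x / (A * (lam * vb)))) := by
      rw [hBD]
      field_simp
      ring
    rw [hraw, e0]
    ring
  rw [hfact]
  have hcne : (lam - rho * eta / 2) * lam * vb / (A * eta) ≠ 0 := by positivity
  rw [mul_eq_zero, or_iff_right hcne, sub_eq_zero]
  constructor
  · intro hs_eq
    have h6 : (K * eta / A * (1 + rho * eta * x / (lam * vb))) ^ 2
        = 1 + (eta ^ 2 / (lam * vb) / A) ^ 2 * (x - -(rho * eta) / (eta ^ 2 / (lam * vb))) ^ 2 := by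
      rw [← hs_eq]
      exact hs2
    have hstar : K ^ 2 * eta ^ 2 * (lam * vb + rho * eta * x) ^ 2
        = (lam * vb) ^ 2 * A ^ 2 + eta ^ 2 * (eta * x + rho * (lam * vb)) ^ 2 := by
      have hstar' : (K ^ 2 * eta ^ 2 * (lam * vb + rho * eta * x) ^ 2) * ((lam * vb) ^ 2 * A ^ 2 * eta ^ 4)
          = ((lam * vb) ^ 2 * A ^ 2 + eta ^ 2 * (eta * x + rho * (lam * vb)) ^ 2) * ((lam * vb) ^ 2 * A ^ 2 * eta ^ 4) := by
        field_simp at h6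
        linear_combination ((lam * vb) ^ 2 * A ^ 2 * eta ^ 4) * h6
      exact mul_right_cancel₀ (by positivity : ((lam * vb) ^ 2 * A ^ 2 * eta ^ 4 : ℝ) ≠ 0) hstar'
    have hquad1 : (2 * (1 - rho ^ 2) * lam * eta ^ 4)
        * ((x + vb / 2) * (2 * (lam - rho * eta) * x - lam * vb)) = 0 := by
      linear_combination (-(4 * (lam - rho * eta / 2) ^ 2)) * hstar
        + (eta ^ 2 * (lam * vb + rho * eta * x) ^ 2) * hK2c
        + (eta ^ 2 * (lam * vb + rho * eta * x) ^ 2 - 4 * (lam - rho * eta / 2) ^ 2 * (lam * vb) ^ 2) * hA2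
    have hcoef : (2 * (1 - rho ^ 2) * lam * eta ^ 4 : ℝ) ≠ 0 :=
      ne_of_gt (mul_pos (mul_pos (mul_pos two_pos hrr) hlam) (pow_pos heta 4))
    rcases mul_eq_zero.1 hquad1 with h | h
    · exact absurd h hcoef
    rcases mul_eq_zero.1 h with h | h
    · left; linear_combination h
    · right
      have hd : vb / (2 * (1 - rho * eta / lam)) = lam * vb / (2 * (lam - rho * eta)) := by
        field_simp
      rw [hd, eq_div_iff (ne_of_gt (by linarith : (0:ℝ) < 2 * (lam - rho * eta)))]
      linear_combination h
  · intro hx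
    have hT : (x + vb / 2) * (2 * (lam - rho * eta) * x - lam * vb) = 0 := by
      rcases hx with rfl | rfl
      · ring
      · have h1 : 1 - rho * eta / lam ≠ 0 := ne_of_gt ha1
        field_simp
        ring
    have hphi0 : 0 ≤ 1 + rho * eta * x / (lam * vb) := by
      rcases hx with rfl | rfl
      · have he : 1 + rho * eta * (-vb / 2) / (lam * vb) = 1 - rho * eta / (2 * lam) := by
          field_simp
          ring
        rw [he]
        have hp : rho * eta / (2 * lam) < 0 :=
          div_neg_of_neg_of_pos (by nlinarith : rho * eta < 0) (by positivity)
        linarith [hp]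
      · have h1 : 1 - rho * eta / lam ≠ 0 := ne_of_gt ha1
        have he : 1 + rho * eta * (vb / (2 * (1 - rho * eta / lam))) / (lam * vb)
            = (2 * lam - rho * eta) / (2 * (lam - rho * eta)) := by
          field_simp
          ring
        rw [he]
        have : (0:ℝ) < (2 * lam - rho * eta) / (2 * (lam - rho * eta)) := by
          apply div_pos <;> nlinarith
        linarith
    have hstar4 : (K ^ 2 * eta ^ 2 * (lam * vb + rho * eta * x) ^ 2) * (4 * (lam - rho * eta / 2) ^ 2)
        = ((lam * vb) ^ 2 * A ^ 2 + eta ^ 2 * (eta * x + rho * (lam * vb)) ^ 2) * (4 * (lam - rho * eta / 2) ^ 2) := by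
      linear_combination (eta ^ 2 * (lam * vb + rho * eta * x) ^ 2) * hK2c
        + (eta ^ 2 * (lam * vb + rho * eta * x) ^ 2 - 4 * (lam - rho * eta / 2) ^ 2 * (lam * vb) ^ 2) * hA2
        + (-(2 * (1 - rho ^ 2) * lam * eta ^ 4)) * hT
    have hstar : K ^ 2 * eta ^ 2 * (lam * vb + rho * eta * x) ^ 2
        = (lam * vb) ^ 2 * A ^ 2 + eta ^ 2 * (eta * x + rho * (lam * vb)) ^ 2 :=
      mul_right_cancel₀ (by positivity : (4 * (lam - rho * eta / 2) ^ 2 : ℝ) ≠ 0) hstar4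
    have hval : 1 + (eta ^ 2 / (lam * vb) / A) ^ 2 * (x - -(rho * eta) / (eta ^ 2 / (lam * vb))) ^ 2
        = (K * eta / A * (1 + rho * eta * x / (lam * vb))) ^ 2 := by
      field_simp
      linear_combination (-1) * hstar
    rw [hsdef, hval, Real.sqrt_sq (mul_nonneg (by positivity) hphi0)]

theorem stmt10 (vb lam eta rho A B C D xi m a K : ℝ)
    (hvb : 0 < vb) (hlam : 0 < lam) (heta : 0 < eta)
    (hrho1 : -1 < rho) (hrho2 : rho < 0)
    (hF : 0 < lam - rho * eta / 2)
    (hA : 0 < A) (hA2 : A ^ 2 = eta ^ 2 * (1 - rho ^ 2))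
    (hB : B = rho * eta * (lam - rho * eta / 2))
    (hC : 0 < C) (hC2 : C ^ 2 = (lam - rho * eta / 2) ^ 2 + eta ^ 2 / 4)
    (hD : 0 < D) (hD2 : D ^ 2 = 1 / A ^ 2 + C ^ 2 / B ^ 2)
    (hxi : xi = eta ^ 2 / (lam * vb)) (hm : m = -(rho * eta) / xi)
    (ha : a = rho * eta / lam)
    (ha2 : 0 < 1 - a / 2) (ha1 : 0 < 1 - a)
    (hK : K = Real.sqrt (1 + (a * A ^ 2 / (4 * B)) / (1 - a / 2))) :
    ∀ x : ℝ,
      (-(K * (lam / xi) * (1 - a / 2)) - K * (B / A ^ 2) * (x - m)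
          - (1 / K) * (B * D / xi) * Real.sqrt (1 + (xi / A) ^ 2 * (x - m) ^ 2)) = 0
        ↔ x = -vb / 2 ∨ x = vb / (2 * (1 - a)) :=
  stmt10_aux vb lam eta rho A B C D xi m a K hvb hlam heta hrho1 hrho2 hF hA hA2 hB hC hC2 hD hD2
    hxi hm ha ha2 ha1 hK
end

section
/- Suppose v(x) > 0 satisfies v(x)/8 + x²/(2v(x)) = ω(x), where ω'(x) = ĥ(x), and suppose as x → +∞ one has v(x)/x → β₊ with 0 < β₊ < 2 and v'(x) → β₊, while ĥ(x) → ĥ₊ ∈ ℝ. Then β₊/8 + 1/(2β₊) = ĥ₊. -/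
open Filter

theorem stmt12 (v ω h : ℝ → ℝ) (β hp : ℝ)
    (hvpos : ∀ x : ℝ, 0 < v x)
    (hvdiff : Differentiable ℝ v) (hωdiff : Differentiable ℝ ω)
    (hid : ∀ x : ℝ, v x / 8 + x ^ 2 / (2 * v x) = ω x)
    (hω' : ∀ x : ℝ, deriv ω x = h x)
    (hβ0 : 0 < β) (hβ2 : β < 2)
    (h1 : Tendsto (fun x => v x / x) atTop (nhds β))
    (h2 : Tendsto (deriv v) atTop (nhds β))
    (h3 : Tendsto h atTop (nhds hp)) :
    β / 8 + 1 / (2 * β) = hp := by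
  have hβne : β ≠ 0 := ne_of_gt hβ0
  have hωeq : ω = fun x => v x / 8 + x ^ 2 / (2 * v x) := by
    funext x; exact (hid x).symm
  have key : ∀ x : ℝ, h x =
      deriv v x / 8 + (2 * x * (2 * v x) - x ^ 2 * (2 * deriv v x)) / (2 * v x) ^ 2 := by
    intro x
    have hv : HasDerivAt v (deriv v x) x := (hvdiff x).hasDerivAt
    have hnum : HasDerivAt (fun x : ℝ => x ^ 2) (2 * x) x := by
      simpa using hasDerivAt_pow 2 x
    have hden : HasDerivAt (fun x : ℝ => 2 * v x) (2 * deriv v x) x := hv.const_mul 2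
    have hne : 2 * v x ≠ 0 := mul_ne_zero two_ne_zero (ne_of_gt (hvpos x))
    have hdiv := hnum.div hden hne
    have htot := (hv.div_const 8).add hdiv
    have : deriv ω x = deriv v x / 8 +
        (2 * x * (2 * v x) - x ^ 2 * (2 * deriv v x)) / (2 * v x) ^ 2 := by
      rw [hωeq]
      exact htot.deriv
    rw [← hω' x, this]
  have tlim : Tendsto (fun x => deriv v x / 8 + (v x / x)⁻¹ - deriv v x / (2 * (v x / x) ^ 2))
      atTop (nhds (β / 8 + β⁻¹ - β / (2 * β ^ 2))) := by
    have t1 := h2.div_const 8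
    have t2 := h1.inv₀ hβne
    have t3 : Tendsto (fun x => 2 * (v x / x) ^ 2) atTop (nhds (2 * β ^ 2)) :=
      (h1.pow 2).const_mul 2
    have t4 := h2.div t3 (by positivity)
    exact (t1.add t2).sub t4
  have heq : ∀ᶠ x in atTop, deriv v x / 8 + (v x / x)⁻¹ - deriv v x / (2 * (v x / x) ^ 2) = h x := by
    filter_upwards [eventually_gt_atTop 0] with x hx
    rw [key x]
    have hvne : v x ≠ 0 := ne_of_gt (hvpos x)
    have hxne : x ≠ 0 := ne_of_gt hx
    field_simp
    ring
  have hlim : Tendsto h atTop (nhds (β / 8 + β⁻¹ - β / (2 * β ^ 2))) :=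
    tlim.congr' heq
  have := tendsto_nhds_unique h3 hlim
  rw [this]
  field_simp
  ring
end
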